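/- Let A ⊆ {0,1}ⁿ with indicator f, let G be a simple graph on n vertices with r edges and edge-vertex incidence matrix M ∈ {0,1}^{r×n}, let ρ > 0, and let Δ ∈ {0,1}^r have independent Bernoulli(1/2+ρ) entries. Define p_M(z) = |A|^{−1} ∑_{x∈A} Pr_Δ[Mx + Δ = z] for z ∈ {0,1}^r (arithmetic mod 2), and let U_r be the uniform distribution on {0,1}^r. Then ‖p_M − U_r‖²_tvd ≤ (2^{2n}/|A|²) ∑_{s ∈ {0,1}^r, s ≠ 0} f̂(Mᵀs)² · (2ρ)^{2|s|}. -/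
import Mathlib


open Finset

-- Total variation distance between two functions (distributions) on a finite space.
noncomputable def tvDist {α : Type*} [Fintype α] (P Q : α → ℝ) : ℝ :=
  (∑ a, |P a - Q a|) / 2

-- Fourier coefficient of the indicator of `A ⊆ 𝔽₂ⁿ`:
-- `f̂(v) = 2^{-n} ∑_x f(x) (−1)^{x·v}`.
open Classical in
noncomputable def cubeFourierCoeff (n : ℕ) (A : Finset (Fin n → ZMod 2))
    (v : Fin n → ZMod 2) : ℝ :=
  ((2 : ℝ) ^ n)⁻¹ * ∑ x : Fin n → ZMod 2, (if x ∈ A then (1 : ℝ) else 0) *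
    (-1 : ℝ) ^ ((∑ i, x i * v i).val)

-- The distribution `p_M(z) = |A|⁻¹ ∑_{x ∈ A} Pr_Δ[Mx + Δ = z]` where `Δ` has
-- independent Bernoulli(1/2+ρ) entries (arithmetic over 𝔽₂).
noncomputable def pMdist (n r : ℕ) (ρ : ℝ) (M : Fin r → Fin n → ZMod 2)
    (A : Finset (Fin n → ZMod 2)) (z : Fin r → ZMod 2) : ℝ :=
  ((A.card : ℝ))⁻¹ * ∑ x ∈ A,
    ∏ i, (if z i + ∑ j, M i j * x j = 1 then (1/2 + ρ) else (1/2 - ρ))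

-- If `M` is the edge-vertex incidence matrix of a simple graph on `n` vertices
-- with `r` edges, then
-- `‖p_M − U_r‖²_tvd ≤ (2^{2n}/|A|²) ∑_{s ≠ 0} f̂(Mᵀs)² (2ρ)^{2|s|}`.
section Aux

noncomputable def chi (a : ZMod 2) : ℝ := (-1 : ℝ) ^ a.val

lemma zmod2_cases (a : ZMod 2) : a = 0 ∨ a = 1 := by revert a; decide

lemma chi_zero : chi 0 = 1 := by simp [chi]
lemma chi_one : chi 1 = -1 := by
  simp [chi, show ZMod.val (1 : ZMod 2) = 1 from by decide]

lemma chi_add (a b : ZMod 2) : chi (a + b) = chi a * chi b := by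
  rcases zmod2_cases a with h | h <;> rcases zmod2_cases b with h' | h' <;>
    subst h <;> subst h' <;>
    simp [chi, show (1 + 1 : ZMod 2) = 0 from by decide,
      show ZMod.val (1 : ZMod 2) = 1 from by decide]

lemma chi_sum {ι : Type*} (s : Finset ι) (f : ι → ZMod 2) :
    chi (∑ i ∈ s, f i) = ∏ i ∈ s, chi (f i) := by
  classical
  induction s using Finset.cons_induction with
  | empty => simp [chi_zero]
  | cons a s ha ih => rw [Finset.sum_cons, Finset.prod_cons, chi_add, ih]

lemma sum_zmod2 (f : ZMod 2 → ℝ) : ∑ b, f b = f 0 + f 1 := by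
  rw [show (univ : Finset (ZMod 2)) = {0, 1} from by decide,
    Finset.sum_pair (by decide : (0 : ZMod 2) ≠ 1)]

lemma sum_chi_mul (w : ZMod 2) :
    (∑ b : ZMod 2, chi (b * w)) = if w = 0 then 2 else 0 := by
  rcases zmod2_cases w with h | h <;> subst h <;> rw [sum_zmod2] <;>
    norm_num [chi_zero, chi_one]

lemma orth {r : ℕ} (w : Fin r → ZMod 2) :
    (∑ s : Fin r → ZMod 2, chi (∑ i, s i * w i)) = if w = 0 then (2 : ℝ) ^ r else 0 := by
  simp_rw [chi_sum]
  rw [← Fintype.piFinset_univ, Finset.sum_prod_piFinset univ (fun i b => chi (b * w i))]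
  by_cases hw : w = 0
  · subst hw; simp [chi_zero]
  · rw [if_neg hw]
    obtain ⟨i, hi⟩ : ∃ i, w i ≠ 0 := by
      by_contra h; push_neg at h; exact hw (funext fun i => h i)
    exact Finset.prod_eq_zero (Finset.mem_univ i) (by rw [sum_chi_mul, if_neg hi])

lemma coord_sum (ρ : ℝ) (s0 a : ZMod 2) :
    (∑ b : ZMod 2, (if b + a = 1 then (1/2 + ρ) else (1/2 - ρ)) * chi (s0 * b))
      = if s0 = 0 then 1 else (-(2 * ρ)) * chi a := by
  rcases zmod2_cases s0 with h | h <;> rcases zmod2_cases a with h' | h' <;>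
    subst h <;> subst h' <;> rw [sum_zmod2] <;>
    simp [chi_zero, chi_one, show (1 + 1 : ZMod 2) = 0 from by decide,
      show (0 : ZMod 2) ≠ 1 from by decide] <;> ring

lemma sum_prod_W {r : ℕ} (ρ : ℝ) (a : Fin r → ZMod 2) (s : Fin r → ZMod 2) :
    (∑ z : Fin r → ZMod 2,
        (∏ i, (if z i + a i = 1 then (1/2 + ρ) else (1/2 - ρ))) * chi (∑ i, s i * z i))
      = ∏ i, (if s i = 0 then 1 else (-(2 * ρ)) * chi (a i)) := by
  have key : ∀ z : Fin r → ZMod 2,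
      (∏ i, (if z i + a i = 1 then (1/2 + ρ) else (1/2 - ρ))) * chi (∑ i, s i * z i)
        = ∏ i, ((if z i + a i = 1 then (1/2 + ρ) else (1/2 - ρ)) * chi (s i * z i)) := by
    intro z; rw [chi_sum, ← Finset.prod_mul_distrib]
  simp_rw [key]
  rw [← Fintype.piFinset_univ,
    Finset.sum_prod_piFinset univ
      (fun i b => (if b + a i = 1 then (1/2 + ρ) else (1/2 - ρ)) * chi (s i * b))]
  exact Finset.prod_congr rfl fun i _ => coord_sum ρ (s i) (a i)

lemma prod_ite_eq_chi {r : ℕ} (c : ℝ) (s a : Fin r → ZMod 2) :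
    (∏ i, (if s i = 0 then (1 : ℝ) else c * chi (a i)))
      = c ^ (univ.filter (fun i => s i = 1)).card * chi (∑ i, s i * a i) := by
  have h1 : ∀ i, (if s i = 0 then (1 : ℝ) else c * chi (a i))
      = (if s i = 1 then c * chi (a i) else 1) := by
    intro i
    rcases zmod2_cases (s i) with h | h <;>
      simp [h, show (0 : ZMod 2) ≠ 1 from by decide,
        show (1 : ZMod 2) ≠ 0 from by decide]
  simp_rw [h1]
  rw [← Finset.prod_filter, Finset.prod_mul_distrib, Finset.prod_const, ← chi_sum]
  congr 2
  rw [Finset.sum_filter]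
  refine Finset.sum_congr rfl fun i _ => ?_
  rcases zmod2_cases (s i) with h | h <;>
    simp [h, show (0 : ZMod 2) ≠ 1 from by decide]

lemma swap_sum {n r : ℕ} (M : Fin r → Fin n → ZMod 2) (s : Fin r → ZMod 2)
    (x : Fin n → ZMod 2) :
    (∑ i, s i * ∑ j, M i j * x j) = ∑ j, x j * ∑ i, M i j * s i := by
  simp_rw [Finset.mul_sum]
  rw [Finset.sum_comm]
  exact Finset.sum_congr rfl fun j _ => Finset.sum_congr rfl fun i _ => by ring

lemma fourier_eq (n : ℕ) (A : Finset (Fin n → ZMod 2)) (v : Fin n → ZMod 2) :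
    (∑ x ∈ A, chi (∑ i, x i * v i)) = 2 ^ n * cubeFourierCoeff n A v := by
  classical
  rw [cubeFourierCoeff, ← mul_assoc, mul_inv_cancel₀ (by positivity : (2:ℝ)^n ≠ 0), one_mul]
  simp_rw [ite_mul, one_mul, zero_mul]
  rw [Finset.sum_ite_mem, Finset.univ_inter]
  rfl

lemma pM_fourier {n r : ℕ} (ρ : ℝ) (M : Fin r → Fin n → ZMod 2)
    (A : Finset (Fin n → ZMod 2)) (s : Fin r → ZMod 2) :
    (∑ z : Fin r → ZMod 2, pMdist n r ρ M A z * chi (∑ i, s i * z i))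
      = (A.card : ℝ)⁻¹ * 2 ^ n * cubeFourierCoeff n A (fun j => ∑ i, M i j * s i)
        * (-(2 * ρ)) ^ (univ.filter (fun i => s i = 1)).card := by
  simp_rw [pMdist, mul_assoc, ← Finset.mul_sum, Finset.sum_mul]
  rw [Finset.sum_comm]
  have key : ∀ x ∈ A,
      (∑ z : Fin r → ZMod 2,
        (∏ i, (if z i + ∑ j, M i j * x j = 1 then (1/2 + ρ) else (1/2 - ρ)))
          * chi (∑ i, s i * z i))
      = (-(2 * ρ)) ^ (univ.filter (fun i => s i = 1)).card
          * chi (∑ j, x j * ∑ i, M i j * s i) := by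
    intro x _
    rw [sum_prod_W ρ (fun i => ∑ j, M i j * x j) s,
      prod_ite_eq_chi, swap_sum]
  rw [Finset.sum_congr rfl key, ← Finset.mul_sum, fourier_eq]
  ring

lemma pM_sum {n r : ℕ} (ρ : ℝ) (M : Fin r → Fin n → ZMod 2)
    (A : Finset (Fin n → ZMod 2)) (hA : A.Nonempty) :
    (∑ z : Fin r → ZMod 2, pMdist n r ρ M A z) = 1 := by
  simp_rw [pMdist, ← Finset.mul_sum]
  rw [Finset.sum_comm]
  have key : ∀ x ∈ A,
      (∑ z : Fin r → ZMod 2,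
        ∏ i, (if z i + ∑ j, M i j * x j = 1 then (1/2 + ρ) else (1/2 - ρ))) = 1 := by
    intro x _
    have := sum_prod_W ρ (fun i => ∑ j, M i j * x j) 0
    simp only [Pi.zero_apply, zero_mul, Finset.sum_const_zero, chi_zero, mul_one,
      if_pos rfl, Finset.prod_const_one] at this
    simpa using this
  rw [Finset.sum_congr rfl key, Finset.sum_const, nsmul_eq_mul, mul_one]
  exact inv_mul_cancel₀ (by exact_mod_cast Finset.card_ne_zero.mpr hA)

lemma parseval {r : ℕ} (g : (Fin r → ZMod 2) → ℝ) :
    (∑ s : Fin r → ZMod 2, (∑ z, g z * chi (∑ i, s i * z i)) ^ 2)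
      = 2 ^ r * ∑ z, g z ^ 2 := by
  have hflip : ∀ a b : ZMod 2, a + b = 0 → b = a := by decide
  have hself : ∀ a : ZMod 2, a + a = 0 := by decide
  have expand : ∀ s : Fin r → ZMod 2, (∑ z, g z * chi (∑ i, s i * z i)) ^ 2
      = ∑ z, ∑ z', g z * g z' * chi (∑ i, s i * (z i + z' i)) := by
    intro s
    rw [sq, Finset.sum_mul_sum]
    refine Finset.sum_congr rfl fun z _ => Finset.sum_congr rfl fun z' _ => ?_
    have hs : (∑ i, s i * (z i + z' i)) = (∑ i, s i * z i) + (∑ i, s i * z' i) := by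
      rw [← Finset.sum_add_distrib]
      exact Finset.sum_congr rfl fun i _ => by ring
    rw [hs, chi_add]; ring
  simp_rw [expand]
  rw [Finset.sum_comm]
  have hswap : ∀ z : Fin r → ZMod 2,
      (∑ s : Fin r → ZMod 2, ∑ z', g z * g z' * chi (∑ i, s i * (z i + z' i)))
        = ∑ z', ∑ s : Fin r → ZMod 2, g z * g z' * chi (∑ i, s i * (z i + z' i)) :=
    fun z => Finset.sum_comm
  simp_rw [hswap]
  have horth : ∀ z z' : Fin r → ZMod 2,
      (∑ s : Fin r → ZMod 2, g z * g z' * chi (∑ i, s i * (z i + z' i)))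
        = if z' = z then g z * g z' * 2 ^ r else 0 := by
    intro z z'
    rw [← Finset.mul_sum, orth (fun i => z i + z' i)]
    by_cases h : z' = z
    · subst h
      have h0 : (fun i => z' i + z' i) = (0 : Fin r → ZMod 2) := funext fun i => hself _
      rw [h0, if_pos rfl, if_pos rfl]
    · rw [if_neg h, if_neg, mul_zero]
      intro hc
      exact h (funext fun i => hflip _ _ (congrFun hc i))
  simp_rw [horth]
  rw [Finset.mul_sum]
  refine Finset.sum_congr rfl fun z _ => ?_
  rw [Finset.sum_ite_eq' univ z (fun z' => g z * g z' * 2 ^ r), if_pos (Finset.mem_univ z)]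
  ring

end Aux

open Classical in
theorem pM_tvd_bound (n r : ℕ) (ρ : ℝ) (hρ : 0 < ρ)
    (M : Fin r → Fin n → ZMod 2)
    (hM : ∀ i : Fin r, ∃ u v : Fin n, u ≠ v ∧
      ∀ j, M i j = if j = u ∨ j = v then 1 else 0)
    (hMinj : Function.Injective M)
    (A : Finset (Fin n → ZMod 2)) (hA : A.Nonempty) :
    (tvDist (pMdist n r ρ M A) (fun _ : Fin r → ZMod 2 => ((2 : ℝ) ^ r)⁻¹)) ^ 2
      ≤ (2 : ℝ) ^ (2 * n) / ((A.card : ℝ) ^ 2) *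
        ∑ s ∈ Finset.univ.filter (fun s : Fin r → ZMod 2 => s ≠ 0),
          cubeFourierCoeff n A (fun j => ∑ i, M i j * s i) ^ 2 *
            (2 * ρ) ^ (2 * (Finset.univ.filter (fun i => s i = 1)).card) := by
  classical
  have hcard0 : (A.card : ℝ) ≠ 0 := by exact_mod_cast Finset.card_ne_zero.mpr hA
  set g : (Fin r → ZMod 2) → ℝ := fun z => pMdist n r ρ M A z - ((2 : ℝ) ^ r)⁻¹ with hg
  have htv : tvDist (pMdist n r ρ M A) (fun _ : Fin r → ZMod 2 => ((2 : ℝ) ^ r)⁻¹)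
      = (∑ z, |g z|) / 2 := rfl
  -- Cauchy–Schwarz
  have hcs : (∑ z, |g z|) ^ 2 ≤ (2 : ℝ) ^ r * ∑ z, g z ^ 2 := by
    have h := sq_sum_le_card_mul_sum_sq (s := (univ : Finset (Fin r → ZMod 2)))
      (f := fun z => |g z|)
    simp only [sq_abs] at h
    calc (∑ z, |g z|) ^ 2
        ≤ ((univ : Finset (Fin r → ZMod 2)).card : ℝ) * ∑ z, g z ^ 2 := by exact_mod_cast h
      _ = (2 : ℝ) ^ r * ∑ z, g z ^ 2 := by
          rw [Finset.card_univ, Fintype.card_fun, ZMod.card, Fintype.card_fin]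
          push_cast; ring
  -- value of the Fourier coefficients of g at nonzero s
  have hF : ∀ s : Fin r → ZMod 2, s ≠ 0 →
      (∑ z, g z * chi (∑ i, s i * z i)) ^ 2
        = (2 : ℝ) ^ (2 * n) / ((A.card : ℝ) ^ 2) *
          (cubeFourierCoeff n A (fun j => ∑ i, M i j * s i) ^ 2 *
            (2 * ρ) ^ (2 * (Finset.univ.filter (fun i => s i = 1)).card)) := by
    intro s hs
    have hsplit : (∑ z, g z * chi (∑ i, s i * z i))
        = (∑ z, pMdist n r ρ M A z * chi (∑ i, s i * z i))
          - ((2 : ℝ) ^ r)⁻¹ * ∑ z : Fin r → ZMod 2, chi (∑ i, s i * z i) := by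
      rw [Finset.mul_sum, ← Finset.sum_sub_distrib]
      exact Finset.sum_congr rfl fun z _ => by rw [hg]; ring
    have hzero : (∑ z : Fin r → ZMod 2, chi (∑ i, s i * z i)) = 0 := by
      have hcomm : ∀ z : Fin r → ZMod 2, (∑ i, s i * z i) = ∑ i, z i * s i :=
        fun z => Finset.sum_congr rfl fun i _ => mul_comm _ _
      simp_rw [hcomm]
      rw [orth s, if_neg hs]
    rw [hsplit, hzero, mul_zero, sub_zero, pM_fourier]
    set k := (Finset.univ.filter (fun i => s i = 1)).card with hk
    have hpow : ((-(2 * ρ)) ^ k) ^ 2 = (2 * ρ) ^ (2 * k) := by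
      rw [neg_pow, mul_pow, ← pow_mul, ← pow_mul, mul_comm k 2, pow_mul, neg_one_sq,
        one_pow, one_mul]
    rw [mul_pow, hpow, mul_pow, mul_pow, inv_pow,
      show (2 : ℝ) ^ (2 * n) = ((2 : ℝ) ^ n) ^ 2 from by rw [← pow_mul, mul_comm]]
    field_simp
  -- F 0 = 0
  have hF0 : (∑ z, g z * chi (∑ i, (0 : Fin r → ZMod 2) i * z i)) = 0 := by
    have hone : ∀ z : Fin r → ZMod 2, chi (∑ i, (0 : Fin r → ZMod 2) i * z i) = 1 := by
      intro z; simp [chi_zero]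
    simp_rw [hone, mul_one, hg]
    rw [Finset.sum_sub_distrib, pM_sum ρ M A hA, Finset.sum_const, Finset.card_univ,
      Fintype.card_fun, ZMod.card, Fintype.card_fin, nsmul_eq_mul]
    push_cast
    rw [mul_inv_cancel₀ (by positivity : (2 : ℝ) ^ r ≠ 0), sub_self]
  -- restrict the sum to nonzero s
  have hfull : (∑ s ∈ Finset.univ.filter (fun s : Fin r → ZMod 2 => s ≠ 0),
        (∑ z, g z * chi (∑ i, s i * z i)) ^ 2)
      = ∑ s : Fin r → ZMod 2, (∑ z, g z * chi (∑ i, s i * z i)) ^ 2 := by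
    apply Finset.sum_filter_of_ne
    intro s _ hne h0
    subst h0
    rw [hF0] at hne
    exact hne (by ring)
  have hsum : (∑ s ∈ Finset.univ.filter (fun s : Fin r → ZMod 2 => s ≠ 0),
        (∑ z, g z * chi (∑ i, s i * z i)) ^ 2)
      = (2 : ℝ) ^ (2 * n) / ((A.card : ℝ) ^ 2) *
        ∑ s ∈ Finset.univ.filter (fun s : Fin r → ZMod 2 => s ≠ 0),
          cubeFourierCoeff n A (fun j => ∑ i, M i j * s i) ^ 2 *
            (2 * ρ) ^ (2 * (Finset.univ.filter (fun i => s i = 1)).card) := by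
    rw [Finset.mul_sum]
    exact Finset.sum_congr rfl fun s hs => hF s (Finset.mem_filter.mp hs).2
  have hRHSnn : 0 ≤ (2 : ℝ) ^ (2 * n) / ((A.card : ℝ) ^ 2) *
        ∑ s ∈ Finset.univ.filter (fun s : Fin r → ZMod 2 => s ≠ 0),
          cubeFourierCoeff n A (fun j => ∑ i, M i j * s i) ^ 2 *
            (2 * ρ) ^ (2 * (Finset.univ.filter (fun i => s i = 1)).card) := by
    apply mul_nonneg (by positivity)
    apply Finset.sum_nonneg
    intro s _
    apply mul_nonneg (sq_nonneg _)
    positivity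
  calc (tvDist (pMdist n r ρ M A) (fun _ : Fin r → ZMod 2 => ((2 : ℝ) ^ r)⁻¹)) ^ 2
      = (∑ z, |g z|) ^ 2 / 4 := by rw [htv]; ring
    _ ≤ ((2 : ℝ) ^ r * ∑ z, g z ^ 2) / 4 := by linarith
    _ = (∑ s : Fin r → ZMod 2, (∑ z, g z * chi (∑ i, s i * z i)) ^ 2) / 4 := by
        rw [parseval g]
    _ = (∑ s ∈ Finset.univ.filter (fun s : Fin r → ZMod 2 => s ≠ 0),
          (∑ z, g z * chi (∑ i, s i * z i)) ^ 2) / 4 := by rw [hfull]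
    _ = ((2 : ℝ) ^ (2 * n) / ((A.card : ℝ) ^ 2) *
        ∑ s ∈ Finset.univ.filter (fun s : Fin r → ZMod 2 => s ≠ 0),
          cubeFourierCoeff n A (fun j => ∑ i, M i j * s i) ^ 2 *
            (2 * ρ) ^ (2 * (Finset.univ.filter (fun i => s i = 1)).card)) / 4 := by
        rw [hsum]
    _ ≤ (2 : ℝ) ^ (2 * n) / ((A.card : ℝ) ^ 2) *
        ∑ s ∈ Finset.univ.filter (fun s : Fin r → ZMod 2 => s ≠ 0),
          cubeFourierCoeff n A (fun j => ∑ i, M i j * s i) ^ 2 *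
            (2 * ρ) ^ (2 * (Finset.univ.filter (fun i => s i = 1)).card) := by
        linarith
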